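/- Let q ≥ 2 and let I = (G_{2,q}, s, t, c, Q) be any QSPP instance on the directed grid graph G_{2,q} with s = v_{1,1}, t = v_{2,q}, nonnegative linear costs c and nonnegative symmetric interaction cost matrix Q with zero diagonal. Then I is linearizable. -/

import Mathlib

/-! Every `s`-`t` path in `G_{2,q}` runs along the top row up to some column `k`, takes the
vertical arc `v_{1,k} → v_{2,k}` and then runs along the bottom row; so the paths are in bijection
with the vertical arcs. Putting on each vertical arc the full quadratic cost of the unique path
through it, and zero on all horizontal arcs, linearizes the instance. -/

/-- An `s`-`t` path in the digraph on vertex type `V` with arc relation `A`,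
represented as the list of its (distinct) vertices. -/
def IsPath {V : Type*} (A : V → V → Prop) (s t : V) (P : List V) : Prop :=
  2 ≤ P.length ∧ P.head? = some s ∧ P.getLast? = some t ∧ P.Nodup ∧ P.Chain' A

/-- The arcs traversed by a path, as the list of ordered pairs of consecutive vertices. -/
def arcsOf {V : Type*} (P : List V) : List (V × V) :=
  P.zip P.tail

/-- Linear cost `C(P,c)` of a path. -/
noncomputable def linCost {V : Type*} (c : V × V → ℝ) (P : List V) : ℝ :=
  ((arcsOf P).map c).sum

/-- Total (quadratic) cost `C(P,c,Q)` of a path: the sum of the interaction costs over all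
ordered pairs of arcs of `P` plus the sum of the linear costs of the arcs of `P`. -/
noncomputable def cost {V : Type*} (c : V × V → ℝ) (Q : V × V → V × V → ℝ)
    (P : List V) : ℝ :=
  ((arcsOf P).map fun e => ((arcsOf P).map fun f => Q e f).sum).sum + linCost c P

/-- A QSPP instance `(G,s,t,c,Q)` is linearizable if there is a nonnegative cost vector `c'`
such that `C(P,c,Q) = C(P,c')` for every `s`-`t` path `P`. -/
def Linearizable {V : Type*} (A : V → V → Prop) (s t : V) (c : V × V → ℝ)
    (Q : V × V → V × V → ℝ) : Prop :=
  ∃ c' : V × V → ℝ, (∀ e, 0 ≤ c' e) ∧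
    ∀ P, IsPath A s t P → cost c Q P = linCost c' P

/-- The arc relation of the directed grid graph `G_{p,q}` (vertices indexed from `0`,
so vertex `(i,j)` with `i < p`, `j < q` corresponds to `v_{i+1,j+1}`). -/
def gridArc (p q : ℕ) : ℕ × ℕ → ℕ × ℕ → Prop := fun a b =>
  a.1 < p ∧ a.2 < q ∧
    ((b = (a.1 + 1, a.2) ∧ a.1 + 1 < p) ∨ (b = (a.1, a.2 + 1) ∧ a.2 + 1 < q))

def gridRow (i : ℕ) : ℕ → ℕ → List (ℕ × ℕ)
  | _, 0 => []
  | j, n + 1 => (i, j) :: gridRow i (j + 1) n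

lemma gridRow_succ (i j n : ℕ) : gridRow i j (n + 1) = (i, j) :: gridRow i (j + 1) n := rfl

def gridPath (q k : ℕ) : List (ℕ × ℕ) :=
  gridRow 0 0 (k + 1) ++ gridRow 1 k (q - k)

section Costs

variable {V : Type*}

lemma linCost_cons_cons (c : V × V → ℝ) (a b : V) (l : List V) :
    linCost c (a :: b :: l) = c (a, b) + linCost c (b :: l) := by
  simp [linCost, arcsOf]

lemma cost_nonneg {c : V × V → ℝ} {Q : V × V → V × V → ℝ} (hc : ∀ e, 0 ≤ c e)
    (hQ : ∀ e f, 0 ≤ Q e f) (P : List V) : 0 ≤ cost c Q P := by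
  refine add_nonneg (List.sum_nonneg fun x hx => ?_) (List.sum_nonneg fun x hx => ?_)
  · obtain ⟨e, -, rfl⟩ := List.mem_map.1 hx
    exact List.sum_nonneg fun y hy => by
      obtain ⟨f, -, rfl⟩ := List.mem_map.1 hy
      exact hQ e f
  · obtain ⟨e, -, rfl⟩ := List.mem_map.1 hx
    exact hc e

end Costs

section GridPaths

variable {q : ℕ}

lemma eq_gridRow_one_of_isChain :
    ∀ (P : List (ℕ × ℕ)) (j : ℕ), j < q → P.IsChain (gridArc 2 q) →
      P.head? = some (1, j) → P.getLast? = some (1, q - 1) → P = gridRow 1 j (q - j)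
  | [], _, _, _, hs, _ => by simp at hs
  | [a], j, hj, _, hs, ht => by
    obtain rfl : a = (1, j) := by simpa using hs
    obtain rfl : j = q - 1 := by simpa using ht
    rw [show q - (q - 1) = 0 + 1 by omega]
    rfl
  | a :: b :: P, j, hj, hP, hs, ht => by
    obtain rfl : a = (1, j) := by simpa using hs
    rw [List.isChain_cons_cons] at hP
    obtain ⟨⟨-, -, ⟨-, hdown⟩ | ⟨rfl, hj'⟩⟩, hP⟩ := hP
    · omega
    rw [List.getLast?_cons_cons] at ht
    rw [eq_gridRow_one_of_isChain _ (j + 1) hj' hP (by simp) ht,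
      show q - j = q - (j + 1) + 1 by omega]
    rfl

lemma exists_eq_gridRow_append_of_isChain :
    ∀ (P : List (ℕ × ℕ)) (j : ℕ), P.IsChain (gridArc 2 q) →
      P.head? = some (0, j) → P.getLast? = some (1, q - 1) →
        ∃ n, j + n < q ∧ P = gridRow 0 j (n + 1) ++ gridRow 1 (j + n) (q - (j + n))
  | [], _, _, hs, _ => by simp at hs
  | [a], j, _, hs, ht => by
    obtain rfl : a = (0, j) := by simpa using hs
    simp at ht
  | a :: b :: P, j, hP, hs, ht => by
    obtain rfl : a = (0, j) := by simpa using hs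
    rw [List.isChain_cons_cons] at hP
    rw [List.getLast?_cons_cons] at ht
    obtain ⟨⟨-, hj, ⟨rfl, -⟩ | ⟨rfl, -⟩⟩, hP⟩ := hP
    · refine ⟨0, hj, ?_⟩
      rw [eq_gridRow_one_of_isChain (_ :: P) j hj hP (by simp) ht]
      rfl
    · obtain ⟨n, hn, hrest⟩ := exists_eq_gridRow_append_of_isChain _ (j + 1) hP (by simp) ht
      refine ⟨n + 1, by omega, ?_⟩
      rw [gridRow_succ, List.cons_append, show j + (n + 1) = j + 1 + n by omega, ← hrest]

lemma exists_eq_gridPath_of_isPath {P : List (ℕ × ℕ)}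
    (hP : IsPath (gridArc 2 q) (0, 0) (1, q - 1) P) : ∃ k < q, P = gridPath q k := by
  obtain ⟨-, hs, ht, -, hchain⟩ := hP
  obtain ⟨k, hk, rfl⟩ := exists_eq_gridRow_append_of_isChain P 0 hchain hs ht
  exact ⟨k, by simpa using hk, by simp [gridPath]⟩

end GridPaths

section LinearCostOnGridPaths

variable {c : (ℕ × ℕ) × (ℕ × ℕ) → ℝ} (hc : ∀ i x y, c ((i, x), (i, y)) = 0)
include hc

lemma linCost_gridRow (i : ℕ) : ∀ j n, linCost c (gridRow i j n) = 0
  | _, 0 => by simp [gridRow, linCost, arcsOf]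
  | _, 1 => by simp [gridRow, linCost, arcsOf]
  | j, n + 2 => by
    rw [gridRow_succ, gridRow_succ, linCost_cons_cons, hc, zero_add, ← gridRow_succ,
      linCost_gridRow i (j + 1) (n + 1)]

lemma linCost_gridRow_append (i : ℕ) (b : ℕ × ℕ) (L : List (ℕ × ℕ)) : ∀ j m,
    linCost c (gridRow i j (m + 1) ++ b :: L) = c ((i, j + m), b) + linCost c (b :: L)
  | j, 0 => linCost_cons_cons c _ _ _
  | j, m + 1 => by
    rw [gridRow_succ, gridRow_succ, List.cons_append, List.cons_append, linCost_cons_cons, hc,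
      zero_add, ← List.cons_append, ← gridRow_succ, linCost_gridRow_append i b L (j + 1) m,
      show j + 1 + m = j + (m + 1) by omega]

lemma linCost_gridPath {q k : ℕ} (hk : k < q) :
    linCost c (gridPath q k) = c ((0, k), (1, k)) := by
  have hrow : gridRow 1 k (q - k) = (1, k) :: gridRow 1 (k + 1) (q - (k + 1)) := by
    rw [show q - k = q - (k + 1) + 1 by omega]
    rfl
  rw [gridPath, hrow, linCost_gridRow_append hc, ← hrow, linCost_gridRow hc, zero_add, add_zero]

end LinearCostOnGridPaths

theorem stmt_19_general (q : ℕ)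
    (c : (ℕ × ℕ) × (ℕ × ℕ) → ℝ) (Q : ((ℕ × ℕ) × (ℕ × ℕ)) → ((ℕ × ℕ) × (ℕ × ℕ)) → ℝ)
    (hc : ∀ e, 0 ≤ c e) (hQ0 : ∀ e f, 0 ≤ Q e f) :
    Linearizable (gridArc 2 q) (0, 0) (1, q - 1) c Q := by
  let c' : (ℕ × ℕ) × (ℕ × ℕ) → ℝ := fun e =>
    if e.1.1 = 0 ∧ e.2.1 = 1 then cost c Q (gridPath q e.1.2) else 0
  have horizontal : ∀ i x y, c' ((i, x), (i, y)) = 0 := by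
    intro i x y
    simp only [c', ite_eq_right_iff, and_imp]
    omega
  refine ⟨c', fun e => ?_, fun P hP => ?_⟩
  · unfold c'
    split_ifs
    exacts [cost_nonneg hc hQ0 _, le_rfl]
  · obtain ⟨k, hk, rfl⟩ := exists_eq_gridPath_of_isPath hP
    rw [linCost_gridPath horizontal hk]
    simp [c']

/-- Every QSPP instance on the directed grid graph `G_{2,q}` (`q ≥ 2`) is linearizable. -/
theorem stmt_19 (q : ℕ) (hq : 2 ≤ q)
    (c : (ℕ × ℕ) × (ℕ × ℕ) → ℝ) (Q : ((ℕ × ℕ) × (ℕ × ℕ)) → ((ℕ × ℕ) × (ℕ × ℕ)) → ℝ)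
    (hc : ∀ e, 0 ≤ c e) (hQ0 : ∀ e f, 0 ≤ Q e f)
    (hQs : ∀ e f, Q e f = Q f e) (hQd : ∀ e, Q e e = 0) :
    Linearizable (gridArc 2 q) (0, 0) (1, q - 1) c Q :=
  stmt_19_general q c Q hc hQ0
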